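/- Negative cycle detection, soundness (Theorem 2.3, second part). For the Bellman–Ford iterates d from source s: if there exists a vertex v with d |V| v < d (|V|−1) v (a strict improvement after |V| − 1 iterations), then there exists a cycle reachable from s whose total weight is negative. -/

import Mathlib

/-! A walk realising `BF E w s |V|` that beats `BF E w s (|V| - 1)` must have exactly `|V|` edges,
so by pigeonhole it revisits some vertex. Cutting out the closed subwalk between the two visits
leaves a walk with fewer than `|V|` edges, whose weight is therefore at least `BF E w s (|V| - 1)`;
the closed subwalk must then carry the (negative) difference. -/

/-- `IsWalk E p t a b` : `p 0 = a`, `p t = b`, and each consecutive pair is an edge. -/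
def IsWalk {V : Type*} (E : V → V → Prop) (p : ℕ → V) (t : ℕ) (a b : V) : Prop :=
  p 0 = a ∧ p t = b ∧ ∀ i < t, E (p i) (p (i + 1))

/-- Weight of a walk with `t` edges. -/
def walkWeight {V : Type*} (w : V → V → ℝ) (p : ℕ → V) (t : ℕ) : ℝ :=
  ∑ i ∈ Finset.range t, w (p i) (p (i + 1))

open Classical in
/-- Bellman–Ford iterates from source `s`. -/
noncomputable def BF {V : Type*} (E : V → V → Prop) (w : V → V → ℝ) (s : V) :
    ℕ → V → EReal
  | 0, v => if v = s then 0 else ⊤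
  | (t + 1), v =>
      min (BF E w s t v) (⨅ u : {u : V // E u v}, (BF E w s t u.1 + (w u.1 v : EReal)))

section Walks

variable {V : Type*} {E : V → V → Prop} {p q : ℕ → V} {a b c : V} {i j k n : ℕ}

def walkAppend (p q : ℕ → V) (i : ℕ) : ℕ → V := fun k => if k < i then p k else q (k - i)

/-- The walk `p` with its closed subwalk from step `i` to step `j` cut out. -/
def cutOut (p : ℕ → V) (i j : ℕ) : ℕ → V := walkAppend p (fun k => p (j + k)) i

def singleEdge (u v : V) : ℕ → V := fun k => if k = 0 then u else v

theorem walkAppend_of_le (h : p i = q 0) (hk : k ≤ i) : walkAppend p q i k = p k := by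
  unfold walkAppend
  split_ifs with hki
  · rfl
  · obtain rfl : k = i := by omega
    simp [h]

theorem walkAppend_add (i k : ℕ) : walkAppend p q i (i + k) = q k := by
  simp [walkAppend]

theorem IsWalk.take (hp : IsWalk E p n a b) (hi : i ≤ n) : IsWalk E p i a (p i) :=
  ⟨hp.1, rfl, fun k hk => hp.2.2 k (by omega)⟩

theorem IsWalk.segment (hp : IsWalk E p n a b) (hij : i ≤ j) (hjn : j ≤ n) :
    IsWalk E (fun k => p (i + k)) (j - i) (p i) (p j) :=
  ⟨by simp, by simp only [Nat.add_sub_cancel' hij],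
    fun k hk => by simpa only [add_assoc] using hp.2.2 (i + k) (by omega)⟩

theorem IsWalk.append (hp : IsWalk E p i a b) (hq : IsWalk E q j b c) :
    IsWalk E (walkAppend p q i) (i + j) a c := by
  have hpq : p i = q 0 := hp.2.1.trans hq.1.symm
  refine ⟨(walkAppend_of_le hpq (Nat.zero_le i)).trans hp.1,
    (walkAppend_add i j).trans hq.2.1, fun k hk => ?_⟩
  by_cases hki : k + 1 ≤ i
  · rw [walkAppend_of_le hpq hki, walkAppend_of_le hpq (by omega)]
    exact hp.2.2 k hki
  · obtain ⟨m, rfl⟩ : ∃ m, k = i + m := ⟨k - i, by omega⟩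
    rw [walkAppend_add, add_assoc, walkAppend_add]
    exact hq.2.2 m (by omega)

theorem isWalk_singleEdge {u v : V} (h : E u v) : IsWalk E (singleEdge u v) 1 u v :=
  ⟨rfl, rfl, fun k hk => by simpa [singleEdge, Nat.lt_one_iff.mp hk] using h⟩

theorem IsWalk.cutOut (hp : IsWalk E p n a b) (hij : i ≤ j) (hjn : j ≤ n) (hpij : p i = p j) :
    IsWalk E (cutOut p i j) (i + (n - j)) a b := by
  have hdrop := hp.segment hjn le_rfl
  rw [hp.2.1, ← hpij] at hdrop
  exact (hp.take (hij.trans hjn)).append hdrop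

variable (w : V → V → ℝ)

theorem walkWeight_add (p : ℕ → V) (i j : ℕ) :
    walkWeight w p (i + j) = walkWeight w p i + walkWeight w (fun k => p (i + k)) j := by
  simp only [walkWeight, Finset.sum_range_add, add_assoc]

theorem walkWeight_append (h : p i = q 0) (j : ℕ) :
    walkWeight w (walkAppend p q i) (i + j) = walkWeight w p i + walkWeight w q j := by
  rw [walkWeight_add]
  congr 1
  · refine Finset.sum_congr rfl fun k hk => ?_
    have hki := Finset.mem_range.mp hk
    rw [walkAppend_of_le h hki.le, walkAppend_of_le h hki]
  · simp only [walkAppend_add]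

theorem walkWeight_singleEdge (u v : V) : walkWeight w (singleEdge u v) 1 = w u v := by
  simp [walkWeight, singleEdge]

theorem walkWeight_eq_cutOut_add (hij : i ≤ j) (hjn : j ≤ n) (hpij : p i = p j) :
    walkWeight w p n =
      walkWeight w (cutOut p i j) (i + (n - j)) + walkWeight w (fun k => p (i + k)) (j - i) := by
  obtain ⟨m, rfl⟩ : ∃ m, j = i + m := ⟨j - i, by omega⟩
  obtain ⟨r, rfl⟩ : ∃ r, n = i + m + r := ⟨n - (i + m), by omega⟩
  have hsplit : walkWeight w p (i + m + r) = walkWeight w p i +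
      (walkWeight w (fun k => p (i + k)) m + walkWeight w (fun k => p (i + m + k)) r) := by
    simp only [add_assoc, walkWeight_add]
  simp only [Nat.add_sub_cancel_left]
  rw [hsplit, cutOut, walkWeight_append w (by simp [hpij])]
  ring

end Walks

theorem exists_lt_le_eq_of_card_le {V : Type*} [Fintype V] {n : ℕ} (p : ℕ → V)
    (hn : Fintype.card V ≤ n) : ∃ i j, i < j ∧ j ≤ n ∧ p i = p j := by
  obtain ⟨a, ha, b, hb, hab, hpab⟩ := Finset.exists_ne_map_eq_of_card_lt_of_maps_to
    (s := Finset.range (n + 1)) (t := Finset.univ) (by simpa using Nat.lt_succ_of_le hn)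
    (f := p) (fun _ _ => Finset.mem_coe.mpr (Finset.mem_univ _))
  rw [Finset.mem_range] at ha hb
  rcases lt_or_gt_of_ne hab with h | h
  · exact ⟨a, b, h, by omega, hpab⟩
  · exact ⟨b, a, h, by omega, hpab.symm⟩

section BellmanFord

variable {V : Type*} (E : V → V → Prop) (w : V → V → ℝ) (s : V) {p : ℕ → V} {v : V} {l t : ℕ}

theorem BF_succ (t : ℕ) (v : V) : BF E w s (t + 1) v =
    min (BF E w s t v) (⨅ u : {u : V // E u v}, (BF E w s t u.1 + (w u.1 v : EReal))) := by
  rw [BF]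

theorem BF_antitone (v : V) : Antitone (BF E w s · v) :=
  antitone_nat_of_succ_le fun t => (BF_succ E w s t v).trans_le (min_le_left _ _)

theorem BF_le_walkWeight (hp : IsWalk E p l s v) : BF E w s l v ≤ walkWeight w p l := by
  induction l generalizing v with
  | zero =>
    obtain rfl : v = s := hp.2.1.symm.trans hp.1
    simp [BF, walkWeight]
  | succ l ih =>
    have hedge : E (p l) v := hp.2.1 ▸ hp.2.2 l l.lt_succ_self
    calc BF E w s (l + 1) v ≤ BF E w s l (p l) + w (p l) v := by
          rw [BF_succ]
          exact (min_le_right _ _).trans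
            (iInf_le (fun u : {u : V // E u v} => BF E w s l u.1 + (w u.1 v : EReal)) ⟨p l, hedge⟩)
      _ ≤ walkWeight w p l + w (p l) v := by
          gcongr
          exact ih (hp.take l.le_succ)
      _ = walkWeight w p (l + 1) := by
          rw [← EReal.coe_add, walkWeight, walkWeight, Finset.sum_range_succ, hp.2.1]

theorem BF_le_walkWeight_of_le (hp : IsWalk E p l s v) (hlt : l ≤ t) :
    BF E w s t v ≤ walkWeight w p l :=
  (BF_antitone E w s v hlt).trans (BF_le_walkWeight E w s hp)

theorem BF_succ_eq_or_exists [Finite V] (t : ℕ) (v : V) :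
    BF E w s (t + 1) v = BF E w s t v ∨
      ∃ u, E u v ∧ BF E w s (t + 1) v = BF E w s t u + w u v := by
  rw [BF_succ]
  rcases isEmpty_or_nonempty {u : V // E u v} with _ | _
  · simp [iInf_of_empty]
  · obtain ⟨u, hu⟩ := exists_eq_ciInf_of_finite
      (f := fun u : {u : V // E u v} => BF E w s t u.1 + (w u.1 v : EReal))
    rw [← hu]
    rcases min_choice (BF E w s t v) (BF E w s t u.1 + w u.1 v) with h | h
    · exact Or.inl h
    · exact Or.inr ⟨u.1, u.2, h⟩

theorem exists_walk_of_BF_ne_top [Finite V] (h : BF E w s t v ≠ ⊤) :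
    ∃ p l, l ≤ t ∧ IsWalk E p l s v ∧ (walkWeight w p l : EReal) ≤ BF E w s t v := by
  induction t generalizing v with
  | zero =>
    obtain rfl : v = s := by by_contra hv; simp [BF, hv] at h
    exact ⟨fun _ => v, 0, le_rfl, ⟨rfl, rfl, by simp⟩, by simp [BF, walkWeight]⟩
  | succ t ih =>
    rcases BF_succ_eq_or_exists E w s t v with hstay | ⟨u, huv, hvia⟩
    · rw [hstay] at h ⊢
      obtain ⟨p, l, hlt, hp, hpw⟩ := ih h
      exact ⟨p, l, hlt.trans t.le_succ, hp, hpw⟩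
    · have hu : BF E w s t u ≠ ⊤ := fun hu => h (by rw [hvia, hu, EReal.top_add_coe])
      obtain ⟨p, l, hlt, hp, hpw⟩ := ih hu
      refine ⟨walkAppend p (singleEdge u v) l, l + 1, by omega,
        hp.append (isWalk_singleEdge huv), ?_⟩
      rw [hvia, walkWeight_append w hp.2.1, walkWeight_singleEdge, EReal.coe_add]
      gcongr

end BellmanFord

theorem bellmanFord_negCycle_sound_general
    {V : Type*} [Fintype V]
    (E : V → V → Prop) (w : V → V → ℝ) (s : V)
    (himp : ∃ v : V, BF E w s (Fintype.card V) v < BF E w s (Fintype.card V - 1) v) :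
    ∃ (c : V) (p : ℕ → V) (l : ℕ), 1 ≤ l ∧ IsWalk E p l c c ∧
      (∃ (q : ℕ → V) (lq : ℕ), IsWalk E q lq s c) ∧ walkWeight w p l < 0 := by
  obtain ⟨v, hv⟩ := himp
  obtain ⟨p, l, hln, hp, hpw⟩ := exists_walk_of_BF_ne_top E w s (ne_top_of_lt hv)
  obtain rfl : l = Fintype.card V := by
    by_contra hne
    exact (hpw.trans_lt hv).not_ge (BF_le_walkWeight_of_le E w s hp (by omega))
  obtain ⟨i, j, hij, hjl, hpij⟩ := exists_lt_le_eq_of_card_le p le_rfl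
  refine ⟨p i, fun k => p (i + k), j - i, by omega, hpij ▸ hp.segment hij.le hjl,
    ⟨p, i, hp.take (by omega)⟩, ?_⟩
  have hcut := BF_le_walkWeight_of_le E w s (hp.cutOut hij.le hjl hpij)
    (show i + (Fintype.card V - j) ≤ Fintype.card V - 1 by omega)
  have hlt := hpw.trans_lt (hv.trans_le hcut)
  rw [walkWeight_eq_cutOut_add w hij.le hjl hpij, EReal.coe_lt_coe_iff] at hlt
  linarith

/-- Negative cycle detection, soundness: a strict improvement at step `|V|`
implies the existence of a negative-weight cycle reachable from `s`. -/
theorem bellmanFord_negCycle_sound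
    {V : Type*} [Fintype V] [Nonempty V]
    (E : V → V → Prop) (w : V → V → ℝ) (s : V)
    (himp : ∃ v : V, BF E w s (Fintype.card V) v < BF E w s (Fintype.card V - 1) v) :
    ∃ (c : V) (p : ℕ → V) (l : ℕ), 1 ≤ l ∧ IsWalk E p l c c ∧
      (∃ (q : ℕ → V) (lq : ℕ), IsWalk E q lq s c) ∧ walkWeight w p l < 0 :=
  bellmanFord_negCycle_sound_general E w s himp
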